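/- Fix κ ∈ ℤ_{≥0} with κ ≥ 1 and a constant A ≥ 0. Suppose nonnegative numbers a_{μ,ν} indexed by dyadic μ, ν satisfy a_{μ,ν} ≤ (A^ℓ / ℓ!) b_ν whenever 5ℓ ≤ |log₂(μ/ν)| < 5(ℓ+1), where b ∈ ℓ²(D) is nonnegative and the weight m satisfies m(μ) ≤ 2^{5(ℓ+1)[m]} m(ν) in the same regime. Then Σ_μ (m(μ) Σ_ν a_{μ,ν})² ≤ C([m]) e^{C₁([m]) A} Σ_ν (m(ν) b_ν)², with C₁([m]) = C₀ 2^{5[m]} for a universal constant C₀. -/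
import Mathlib


noncomputable section

open MeasureTheory Real Complex Filter Topology
open scoped ENNReal NNReal FourierTransform

/-- The spatial domain `ℝ²`. -/
abbrev Plane := EuclideanSpace ℝ (Fin 2)

/-- The dyadic Littlewood–Paley symbols built from a bump function `φ`:
`φ_1 = φ` and `φ_{2^k}(ξ) = φ(ξ/2^k) - φ(2ξ/2^k)` for `k ≥ 1`. -/
def lpSymbol (φ : Plane → ℝ) : ℕ → Plane → ℝ
  | 0 => φ
  | k + 1 => fun ξ => φ (((2 : ℝ) ^ (k + 1))⁻¹ • ξ) - φ (((2 : ℝ) ^ k)⁻¹ • ξ)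

/-- The convolution kernel of the Littlewood–Paley projection at frequency `2^k`. -/
def lpKernel (φ : Plane → ℝ) (k : ℕ) : Plane → ℂ :=
  𝓕⁻ (fun ξ => (lpSymbol φ k ξ : ℂ))

/-- The inhomogeneous Littlewood–Paley projection `P_{2^k}`. -/
def LP (φ : Plane → ℝ) (k : ℕ) (f : Plane → ℂ) : Plane → ℂ :=
  fun x => ∫ y : Plane, lpKernel φ k (x - y) * f y

/-- The projection `P_{≤ 2^n}`. -/
def LPle (φ : Plane → ℝ) (n : ℕ) (f : Plane → ℂ) : Plane → ℂ :=
  fun x => ∑ k ∈ Finset.range (n + 1), LP φ k f x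

/-- Hypotheses on the Littlewood–Paley bump function: smooth, radial, radially
nonincreasing, `≡ 1` on the unit ball and `≡ 0` outside the ball of radius 2. -/
def IsLPBump (φ : Plane → ℝ) : Prop :=
  ContDiff ℝ (⊤ : ℕ∞) φ ∧ (∀ x y : Plane, ‖x‖ = ‖y‖ → φ x = φ y) ∧
    (∀ x y : Plane, ‖x‖ ≤ ‖y‖ → φ y ≤ φ x) ∧
    (∀ ξ : Plane, ‖ξ‖ ≤ 1 → φ ξ = 1) ∧ (∀ ξ : Plane, 2 ≤ ‖ξ‖ → φ ξ = 0)

/-- A Sobolev weight on the dyadic frequencies `2^k`, `k ∈ ℕ`. -/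
def SobolevWeight (m : ℕ → ℝ) : Prop :=
  m 0 = 1 ∧ (∀ k, 0 < m k) ∧
    ∃ c C : ℝ, 0 < c ∧ c ≤ 1 ∧ 1 ≤ C ∧ ∀ k, c ≤ m (k + 1) / m k ∧ m (k + 1) / m k ≤ C

/-- The quantity `[m] = max(-inf_λ log₂(m(2λ)/m(λ)), sup_λ log₂(m(2λ)/m(λ)))`. -/
def wBracket (m : ℕ → ℝ) : ℝ :=
  max (⨆ k : ℕ, Real.logb 2 (m (k + 1) / m k)) (⨆ k : ℕ, -Real.logb 2 (m (k + 1) / m k))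

/-- The generalised Sobolev norm `‖f‖_{H^m}` with weight `m`. -/
def HmNorm (φ : Plane → ℝ) (m : ℕ → ℝ) (f : Plane → ℂ) : ℝ≥0∞ :=
  (∑' k : ℕ, (ENNReal.ofReal (m k) * eLpNorm (LP φ k f) 2 volume) ^ 2) ^ (1/2 : ℝ)

/-- The Sobolev norm `‖f‖_{H^s}` (Besov-type, built from Littlewood–Paley pieces). -/
def HsNorm (φ : Plane → ℝ) (s : ℝ) (f : Plane → ℂ) : ℝ≥0∞ :=
  HmNorm φ (fun k => (2 : ℝ) ^ ((k : ℝ) * s)) f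

/-- Spatial partial derivative in the `i`-th coordinate direction. -/
def pd (i : Fin 2) (f : Plane → ℂ) (x : Plane) : ℂ :=
  fderiv ℝ f x (EuclideanSpace.single i 1)

/-- The spatial Laplacian. -/
def lap (f : Plane → ℂ) (x : Plane) : ℂ := ∑ i : Fin 2, pd i (pd i f) x

/-- The paradifferential operator
`𝔓_B w = Σ_{λ≥1} [P_{≤2^{-5}λ}B_i ⬝ P_λ ∂_i w + P_λ(P_{≤2^{-5}λ}B_i ⬝ ∂_i w)]`. -/
def PBop (φ : Plane → ℝ) (B : ℝ → Plane → Plane) (t : ℝ) (w : Plane → ℂ) (x : Plane) : ℂ :=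
  ∑' k : ℕ,
    if 5 ≤ k then
      ∑ i : Fin 2,
        (LPle φ (k - 5) (fun y => (B t y i : ℂ)) x * LP φ k (pd i w) x
          + LP φ k (fun y => LPle φ (k - 5) (fun z => (B t z i : ℂ)) y * pd i w y) x)
    else 0

/-- `‖B‖_{L^∞_{t,x}([0,1))}`. -/
def BsupNorm (B : ℝ → Plane → Plane) : ℝ≥0∞ :=
  ⨆ t ∈ Set.Ico (0 : ℝ) 1, eLpNorm (B t) ∞ volume

/-- `‖∇B(t)‖_{L^∞_x}`. -/
def gradBNorm (B : ℝ → Plane → Plane) (t : ℝ) : ℝ≥0∞ :=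
  eLpNorm (fun x => fderiv ℝ (B t) x) ∞ volume

/-- `‖∇B‖_{L¹_t L^∞_x([0,1))}`. -/
def gradBL1 (B : ℝ → Plane → Plane) : ℝ≥0∞ :=
  ∫⁻ t in Set.Ico (0 : ℝ) 1, gradBNorm B t

/-- An admissible form: bounded, with `∇B ∈ L¹_t L^∞_x` and divergence free. -/
def Admissible (B : ℝ → Plane → Plane) : Prop :=
  (∀ t, Differentiable ℝ (B t)) ∧ BsupNorm B < ∞ ∧ gradBL1 B < ∞ ∧
    ∀ t x, ∑ i : Fin 2, fderiv ℝ (fun y => B t y i) x (EuclideanSpace.single i 1) = 0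

/-- `u` solves `(∂_t - iΔ + 𝔓_B)u = 0` on `[0,T)`. -/
def SolvesHom (φ : Plane → ℝ) (B : ℝ → Plane → Plane) (T : ℝ) (u : ℝ → Plane → ℂ) : Prop :=
  ∀ t ∈ Set.Ico (0 : ℝ) T, ∀ x,
    HasDerivAt (fun τ => u τ x) (Complex.I * lap (u t) x - PBop φ B t (u t) x) t

/-- The antisymmetric symbol `ε_{ij}` with `ε_{12} = 1`. -/
def eps : Fin 2 → Fin 2 → ℝ := fun i j =>
  if i = 0 ∧ j = 1 then 1 else if i = 1 ∧ j = 0 then -1 else 0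

/-- The Biot–Savart integral `∂_j (-Δ)⁻¹ F (x) = -(1/2π) ∫ (x_j-y_j)/|x-y|² F(y) dy`. -/
def biotSavart (F : Plane → ℂ) (j : Fin 2) (x : Plane) : ℂ :=
  -(1 / (2 * Real.pi) : ℝ) * ∫ y : Plane, ((((x - y) j) / ‖x - y‖ ^ 2 : ℝ) : ℂ) * F y

/-- The bilinear form `N²_x[u₁,u₂]_i = ε_{ij} ∂_j (-Δ)⁻¹ (u₁ u₂)`. -/
def N2x (u₁ u₂ : Plane → ℂ) (i : Fin 2) (x : Plane) : ℂ :=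
  ∑ j : Fin 2, (eps i j : ℂ) * biotSavart (fun y => u₁ y * u₂ y) j x

/-- The 2D Newtonian potential `(-Δ)⁻¹ F (x) = -(1/2π) ∫ log|x-y| F(y) dy`. -/
def invLap (F : Plane → ℂ) (x : Plane) : ℂ :=
  -(1 / (2 * Real.pi) : ℝ) * ∫ y : Plane, ((Real.log ‖x - y‖ : ℝ) : ℂ) * F y

/-- `∇u₁ ∧ ∇u₂ = ∂₁u₁ ∂₂u₂ - ∂₂u₁ ∂₁u₂`. -/
def wedge (u₁ u₂ : Plane → ℂ) (y : Plane) : ℂ :=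
  pd 0 u₁ y * pd 1 u₂ y - pd 1 u₁ y * pd 0 u₂ y

/-- `N²₀[u₁,u₂] = (-Δ)⁻¹(∇u₁ ∧ ∇u₂)`. -/
def N20 (u₁ u₂ : Plane → ℂ) : Plane → ℂ := invLap (wedge u₁ u₂)

/-- The space-time `L⁴_{t,x}` norm on `[0,T) × ℝ²`. -/
def L4tx (T : ℝ) (u : ℝ → Plane → ℂ) : ℝ≥0∞ :=
  (∫⁻ t in Set.Ico (0 : ℝ) T, ∫⁻ x, (‖u t x‖₊ : ℝ≥0∞) ^ (4 : ℕ)) ^ (1/4 : ℝ)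

/-- The norm `‖ψ‖_{Ψ^m} = ‖ψ‖_{L^∞_t H^m} + sup_μ μ^{-1/4} m(μ) ‖P_μ ψ‖_{L⁴_{t,x}}`. -/
def PsiNorm (φ : Plane → ℝ) (m : ℕ → ℝ) (T : ℝ) (ψ : ℝ → Plane → ℂ) : ℝ≥0∞ :=
  (⨆ t ∈ Set.Ico (0 : ℝ) T, HmNorm φ m (ψ t)) +
    ⨆ k : ℕ, (2 : ℝ≥0∞) ^ ((k : ℝ) * (-(1/4) : ℝ)) * ENNReal.ofReal (m k) *
      L4tx T (fun t => LP φ k (ψ t))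

/-- The norm `‖ψ‖_{Ψ^σ}`. -/
def PsiS (φ : Plane → ℝ) (s : ℝ) (T : ℝ) (ψ : ℝ → Plane → ℂ) : ℝ≥0∞ :=
  PsiNorm φ (fun k => (2 : ℝ) ^ ((k : ℝ) * s)) T ψ


-- Cauchy-Schwarz for tsums of nonneg reals
private lemma aux_cs (u v : ℕ → ℝ) (hu : ∀ n, 0 ≤ u n) (hv : ∀ n, 0 ≤ v n)
    (hu2 : Summable fun n => u n ^ 2) (hv2 : Summable fun n => v n ^ 2) :
    (∑' n, u n * v n) ^ 2 ≤ (∑' n, u n ^ 2) * (∑' n, v n ^ 2) := by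
  have huv : Summable fun n => u n * v n := by
    apply Summable.of_nonneg_of_le (fun n => mul_nonneg (hu n) (hv n))
      (fun n => ?_) ((hu2.add hv2).div_const 2)
    nlinarith [sq_nonneg (u n - v n)]
  have hT1 : 0 ≤ ∑' n, u n ^ 2 := tsum_nonneg fun n => sq_nonneg _
  have hT2 : 0 ≤ ∑' n, v n ^ 2 := tsum_nonneg fun n => sq_nonneg _
  have h1 : ∑' n, u n * v n ≤ Real.sqrt ((∑' n, u n ^ 2) * (∑' n, v n ^ 2)) := by
    apply Summable.tsum_le_of_sum_le huv
    intro s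
    apply Real.le_sqrt_of_sq_le
    calc (∑ n ∈ s, u n * v n) ^ 2 ≤ (∑ n ∈ s, u n ^ 2) * ∑ n ∈ s, v n ^ 2 :=
          Finset.sum_mul_sq_le_sq_mul_sq s u v
      _ ≤ (∑' n, u n ^ 2) * (∑' n, v n ^ 2) := by
          apply mul_le_mul (Summable.sum_le_tsum s (fun i _ => sq_nonneg _) hu2)
            (Summable.sum_le_tsum s (fun i _ => sq_nonneg _) hv2)
            (Finset.sum_nonneg fun i _ => sq_nonneg _) hT1
  calc (∑' n, u n * v n) ^ 2 ≤ Real.sqrt ((∑' n, u n ^ 2) * (∑' n, v n ^ 2)) ^ 2 := by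
        apply pow_le_pow_left₀ (tsum_nonneg fun n => mul_nonneg (hu n) (hv n)) h1
    _ = _ := Real.sq_sqrt (mul_nonneg hT1 hT2)

private lemma aux_div5 (g : ℕ → ℝ) (n : ℕ) :
    ∑ d ∈ Finset.range (5 * n), g (d / 5) = 5 * ∑ ℓ ∈ Finset.range n, g ℓ := by
  induction n with
  | zero => simp
  | succ n ih =>
    have h5 : 5 * (n + 1) = (5 * n) + 1 + 1 + 1 + 1 + 1 := by ring
    rw [h5, Finset.sum_range_succ, Finset.sum_range_succ, Finset.sum_range_succ,
      Finset.sum_range_succ, Finset.sum_range_succ, ih, Finset.sum_range_succ,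
      show (5 * n) / 5 = n by omega, show (5 * n + 1) / 5 = n by omega,
      show (5 * n + 1 + 1) / 5 = n by omega, show (5 * n + 1 + 1 + 1) / 5 = n by omega,
      show (5 * n + 1 + 1 + 1 + 1) / 5 = n by omega]
    ring

private lemma aux_shift (k : ℕ → ℝ) (hk0 : ∀ d, 0 ≤ k d) (hk : Summable k) (μ : ℕ) :
    Summable (fun ν : ℕ => k ((μ : ℤ) - (ν : ℤ)).natAbs) ∧
      ∑' ν : ℕ, k ((μ : ℤ) - (ν : ℤ)).natAbs ≤ 2 * ∑' d, k d := by
  set f : ℕ → ℝ := fun ν => k ((μ : ℤ) - (ν : ℤ)).natAbs with hf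
  have hrw : (fun n : ℕ => f (n + (μ + 1))) = fun n => k (n + 1) := by
    funext n
    show k ((μ : ℤ) - ((n + (μ + 1) : ℕ) : ℤ)).natAbs = k (n + 1)
    congr 1
    omega
  have h1 : Summable (fun n : ℕ => k (n + 1)) := (summable_nat_add_iff 1).2 hk
  have hsum : Summable f := (summable_nat_add_iff (μ + 1)).1 (hrw ▸ h1)
  refine ⟨hsum, ?_⟩
  have h2 : (∑ i ∈ Finset.range (μ + 1), f i) + ∑' n, f (n + (μ + 1)) = ∑' n, f n :=
    Summable.sum_add_tsum_nat_add (μ + 1) hsum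
  have h3 : ∑' n, f (n + (μ + 1)) = ∑' n, k (n + 1) := by rw [hrw]
  have h4 : ∑' n : ℕ, k (n + 1) ≤ ∑' d, k d := by
    have := Summable.sum_add_tsum_nat_add 1 hk
    have h0 : 0 ≤ ∑ i ∈ Finset.range 1, k i := Finset.sum_nonneg fun i _ => hk0 i
    linarith
  have h5 : ∑ i ∈ Finset.range (μ + 1), f i ≤ ∑' d, k d := by
    have he : ∑ i ∈ Finset.range (μ + 1), f i = ∑ i ∈ Finset.range (μ + 1), k (μ - i) := by
      apply Finset.sum_congr rfl
      intro i hi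
      have hi' : i ≤ μ := by simpa [Nat.lt_succ_iff] using hi
      show k ((μ : ℤ) - (i : ℤ)).natAbs = k (μ - i)
      congr 1
      omega
    have hrefl : ∑ j ∈ Finset.range (μ + 1), k (μ + 1 - 1 - j)
        = ∑ j ∈ Finset.range (μ + 1), k j := Finset.sum_range_reflect (fun j => k j) (μ + 1)
    have he2 : ∑ i ∈ Finset.range (μ + 1), k (μ - i)
        = ∑ j ∈ Finset.range (μ + 1), k (μ + 1 - 1 - j) := by
      apply Finset.sum_congr rfl
      intro i _
      congr 1
    rw [he, he2, hrefl]
    exact Summable.sum_le_tsum _ (fun i _ => hk0 i) hk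
  have h6 : ∑' n, f n ≤ 2 * ∑' d, k d := by rw [← h2, h3]; linarith
  exact h6


/-- The summation lemma: if `a_{μ,ν} ≤ (A^ℓ/ℓ!) b_ν` for
`5ℓ ≤ |log₂(μ/ν)| < 5(ℓ+1)` and the weight satisfies the corresponding dyadic
comparison, then `Σ_μ (m(μ) Σ_ν a_{μ,ν})² ≤ C([m]) e^{C₀ 2^{5[m]} A} Σ_ν (m(ν) b_ν)²`. -/
theorem summation_lemma :
    ∃ C₀ : ℝ, 0 < C₀ ∧
      ∀ m : ℕ → ℝ, SobolevWeight m →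
        ∃ C : ℝ, 0 < C ∧
          ∀ (A : ℝ) (a : ℕ → ℕ → ℝ) (b : ℕ → ℝ),
            0 ≤ A → (∀ μ ν, 0 ≤ a μ ν) → (∀ ν, 0 ≤ b ν) →
            Summable (fun ν => (m ν * b ν) ^ 2) →
            (∀ ℓ μ ν : ℕ, 5 * (ℓ : ℤ) ≤ |(μ : ℤ) - (ν : ℤ)| →
              |(μ : ℤ) - (ν : ℤ)| < 5 * ((ℓ : ℤ) + 1) →
              m μ ≤ (2 : ℝ) ^ ((5 * ((ℓ : ℝ) + 1)) * wBracket m) * m ν) →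
            (∀ ℓ μ ν : ℕ, 5 * (ℓ : ℤ) ≤ |(μ : ℤ) - (ν : ℤ)| →
              |(μ : ℤ) - (ν : ℤ)| < 5 * ((ℓ : ℤ) + 1) →
              a μ ν ≤ A ^ ℓ / (Nat.factorial ℓ : ℝ) * b ν) →
            ∑' μ : ℕ, (m μ * ∑' ν : ℕ, a μ ν) ^ 2 ≤
              C * Real.exp ((C₀ * (2 : ℝ) ^ (5 * wBracket m)) * A) *
                ∑' ν : ℕ, (m ν * b ν) ^ 2 := by
  refine ⟨2, by norm_num, ?_⟩
  intro m hm
  obtain ⟨hm0, hmpos, -⟩ := hm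
  set W := wBracket m with hW
  set K : ℝ := (2 : ℝ) ^ (5 * W) with hKdef
  have hK : 0 < K := Real.rpow_pos_of_pos (by norm_num) _
  refine ⟨100 * K ^ 2, by positivity, ?_⟩
  intro A a b hA ha0 hb0 hb2 hw hab
  set x : ℕ → ℝ := fun ν => m ν * b ν with hxdef
  have hx0 : ∀ ν, 0 ≤ x ν := fun ν => mul_nonneg (hmpos ν).le (hb0 ν)
  have hx2 : Summable fun ν => x ν ^ 2 := hb2
  set g : ℕ → ℝ := fun ℓ => K * ((K * A) ^ ℓ / (Nat.factorial ℓ : ℝ)) with hgdef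
  have hKA : 0 ≤ K * A := mul_nonneg hK.le hA
  have hg0 : ∀ ℓ, 0 ≤ g ℓ := fun ℓ => by
    apply mul_nonneg hK.le (div_nonneg (pow_nonneg hKA _) (by positivity))
  have hgsum : Summable g := (Real.summable_pow_div_factorial (K * A)).mul_left K
  have hgts : ∑' ℓ, g ℓ = K * Real.exp (K * A) := by
    rw [hgdef]
    rw [tsum_mul_left]
    congr 1
    rw [Real.exp_eq_exp_ℝ, NormedSpace.exp_eq_tsum_div]
  set k : ℕ → ℝ := fun d => g (d / 5) with hkdef
  have hk0 : ∀ d, 0 ≤ k d := fun d => hg0 _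
  have hsumbound : ∀ n, ∑ d ∈ Finset.range n, k d ≤ 5 * (K * Real.exp (K * A)) := by
    intro n
    calc ∑ d ∈ Finset.range n, k d ≤ ∑ d ∈ Finset.range (5 * n), k d := by
          apply Finset.sum_le_sum_of_subset_of_nonneg
            (Finset.range_subset_range.2 (by omega)) (fun i _ _ => hk0 i)
      _ = 5 * ∑ ℓ ∈ Finset.range n, g ℓ := aux_div5 g n
      _ ≤ 5 * ∑' ℓ, g ℓ := by
          have := Summable.sum_le_tsum (Finset.range n) (fun i _ => hg0 i) hgsum
          linarith
      _ = 5 * (K * Real.exp (K * A)) := by rw [hgts]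
  have hksum : Summable k := summable_of_sum_range_le hk0 hsumbound
  set S : ℝ := ∑' d, k d with hS
  have hS0 : 0 ≤ S := tsum_nonneg hk0
  have hSle : S ≤ 5 * (K * Real.exp (K * A)) :=
    Real.tsum_le_of_sum_range_le hk0 hsumbound
  -- pointwise key bound
  have hkey : ∀ μ ν : ℕ, m μ * a μ ν ≤ k ((μ : ℤ) - (ν : ℤ)).natAbs * x ν := by
    intro μ ν
    set d : ℕ := ((μ : ℤ) - (ν : ℤ)).natAbs with hd
    set ℓ : ℕ := d / 5 with hl
    have h1 : 5 * (ℓ : ℤ) ≤ |(μ : ℤ) - (ν : ℤ)| := by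
      rw [Int.abs_eq_natAbs]; omega
    have h2 : |(μ : ℤ) - (ν : ℤ)| < 5 * ((ℓ : ℤ) + 1) := by
      rw [Int.abs_eq_natAbs]; omega
    have hw' := hw ℓ μ ν h1 h2
    have ha' := hab ℓ μ ν h1 h2
    have hKpow : (2 : ℝ) ^ ((5 * ((ℓ : ℝ) + 1)) * W) = K ^ (ℓ + 1) := by
      rw [hKdef, ← Real.rpow_natCast ((2 : ℝ) ^ (5 * W)) (ℓ + 1),
        ← Real.rpow_mul (by norm_num : (0:ℝ) ≤ 2)]
      congr 1
      push_cast
      ring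
    have step1 : m μ * a μ ν ≤ m μ * (A ^ ℓ / (Nat.factorial ℓ : ℝ) * b ν) :=
      mul_le_mul_of_nonneg_left ha' (hmpos μ).le
    have step2 : m μ * (A ^ ℓ / (Nat.factorial ℓ : ℝ) * b ν)
        ≤ (K ^ (ℓ + 1) * m ν) * (A ^ ℓ / (Nat.factorial ℓ : ℝ) * b ν) := by
      apply mul_le_mul_of_nonneg_right _ (mul_nonneg (div_nonneg (pow_nonneg hA _) (Nat.cast_nonneg _)) (hb0 ν))
      rw [← hKpow]
      exact hw'
    have step3 : (K ^ (ℓ + 1) * m ν) * (A ^ ℓ / (Nat.factorial ℓ : ℝ) * b ν)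
        = k d * x ν := by
      show _ = K * ((K * A) ^ (d/5) / (Nat.factorial (d/5) : ℝ)) * (m ν * b ν)
      rw [← hl, mul_pow, pow_succ]
      ring
    calc m μ * a μ ν ≤ _ := step1
      _ ≤ _ := step2
      _ = k d * x ν := step3

  -- Step A
  have hM : ∀ ν, x ν ≤ Real.sqrt (∑' ι, x ι ^ 2) := by
    intro ν
    exact Real.le_sqrt_of_sq_le (Summable.le_tsum hx2 ν (fun i _ => sq_nonneg _))
  have hkx : ∀ μ : ℕ, Summable (fun ν : ℕ => k ((μ:ℤ)-(ν:ℤ)).natAbs * x ν) := by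
    intro μ
    apply Summable.of_nonneg_of_le (fun ν => mul_nonneg (hk0 _) (hx0 ν))
      (fun ν => mul_le_mul_of_nonneg_left (hM ν) (hk0 _))
      ((aux_shift k hk0 hksum μ).1.mul_right _)
  have hasum : ∀ μ, Summable (fun ν => a μ ν) := by
    intro μ
    apply Summable.of_nonneg_of_le (ha0 μ) (fun ν => ?_) ((hkx μ).mul_left (m μ)⁻¹)
    have h := hkey μ ν
    calc a μ ν = (m μ)⁻¹ * (m μ * a μ ν) := by
          rw [inv_mul_cancel_left₀ (hmpos μ).ne']
      _ ≤ (m μ)⁻¹ * (k ((μ:ℤ)-(ν:ℤ)).natAbs * x ν) :=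
          mul_le_mul_of_nonneg_left h (inv_nonneg.2 (hmpos μ).le)
  have hstepA : ∀ μ, m μ * (∑' ν, a μ ν) ≤ ∑' ν : ℕ, k ((μ:ℤ)-(ν:ℤ)).natAbs * x ν := by
    intro μ
    rw [← tsum_mul_left]
    exact Summable.tsum_le_tsum (fun ν => hkey μ ν) ((hasum μ).mul_left _) (hkx μ)
  -- Step B
  have hkx2 : ∀ μ : ℕ, Summable (fun ν : ℕ => k ((μ:ℤ)-(ν:ℤ)).natAbs * x ν ^ 2) := by
    intro μ
    apply Summable.of_nonneg_of_le (fun ν => mul_nonneg (hk0 _) (sq_nonneg _))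
      (fun ν => mul_le_mul_of_nonneg_right (Summable.le_tsum hksum _ (fun i _ => hk0 i)) (sq_nonneg _))
      (hx2.mul_left S)
  have hstepB : ∀ μ : ℕ, (∑' ν : ℕ, k ((μ:ℤ)-(ν:ℤ)).natAbs * x ν) ^ 2
      ≤ (2 * S) * ∑' ν : ℕ, k ((μ:ℤ)-(ν:ℤ)).natAbs * x ν ^ 2 := by
    intro μ
    have hu : ∀ ν : ℕ, (0:ℝ) ≤ Real.sqrt (k ((μ:ℤ)-(ν:ℤ)).natAbs) := fun ν => Real.sqrt_nonneg _
    have hu2 : Summable (fun ν : ℕ => Real.sqrt (k ((μ:ℤ)-(ν:ℤ)).natAbs) ^ 2) :=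
      (aux_shift k hk0 hksum μ).1.congr fun ν => (Real.sq_sqrt (hk0 _)).symm
    have hv2 : Summable (fun ν : ℕ => (Real.sqrt (k ((μ:ℤ)-(ν:ℤ)).natAbs) * x ν) ^ 2) :=
      (hkx2 μ).congr fun ν => by rw [mul_pow (Real.sqrt _) (x ν) 2, Real.sq_sqrt (hk0 _)]
    have hcs := aux_cs (fun ν => Real.sqrt (k ((μ:ℤ)-(ν:ℤ)).natAbs))
      (fun ν => Real.sqrt (k ((μ:ℤ)-(ν:ℤ)).natAbs) * x ν)
      hu (fun ν => mul_nonneg (hu ν) (hx0 ν)) hu2 hv2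
    have e1 : (∑' ν : ℕ, Real.sqrt (k ((μ:ℤ)-(ν:ℤ)).natAbs)
        * (Real.sqrt (k ((μ:ℤ)-(ν:ℤ)).natAbs) * x ν))
        = ∑' ν : ℕ, k ((μ:ℤ)-(ν:ℤ)).natAbs * x ν :=
      tsum_congr fun ν => by rw [← mul_assoc, Real.mul_self_sqrt (hk0 _)]
    have e2 : (∑' ν : ℕ, Real.sqrt (k ((μ:ℤ)-(ν:ℤ)).natAbs) ^ 2)
        = ∑' ν : ℕ, k ((μ:ℤ)-(ν:ℤ)).natAbs := tsum_congr fun ν => Real.sq_sqrt (hk0 _)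
    have e3 : (∑' ν : ℕ, (Real.sqrt (k ((μ:ℤ)-(ν:ℤ)).natAbs) * x ν) ^ 2)
        = ∑' ν : ℕ, k ((μ:ℤ)-(ν:ℤ)).natAbs * x ν ^ 2 :=
      tsum_congr fun ν => by rw [mul_pow (Real.sqrt _) (x ν) 2, Real.sq_sqrt (hk0 _)]
    rw [e1, e2, e3] at hcs
    refine hcs.trans (mul_le_mul_of_nonneg_right ((aux_shift k hk0 hksum μ).2)
      (tsum_nonneg fun ν => mul_nonneg (hk0 _) (sq_nonneg _)))
  -- Step C
  have hT0 : 0 ≤ ∑' ν, x ν ^ 2 := tsum_nonneg fun ν => sq_nonneg _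
  have hfin : ∀ N : ℕ, ∑ μ ∈ Finset.range N, (m μ * ∑' ν, a μ ν) ^ 2
      ≤ (2*S) * ((2*S) * ∑' ν, x ν ^ 2) := by
    intro N
    have c1 : ∑ μ ∈ Finset.range N, (m μ * ∑' ν, a μ ν) ^ 2
        ≤ ∑ μ ∈ Finset.range N, (2*S) * ∑' ν : ℕ, k ((μ:ℤ)-(ν:ℤ)).natAbs * x ν ^ 2 := by
      apply Finset.sum_le_sum
      intro μ _
      have nn : 0 ≤ m μ * ∑' ν, a μ ν := mul_nonneg (hmpos μ).le (tsum_nonneg (ha0 μ))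
      calc (m μ * ∑' ν, a μ ν) ^ 2 ≤ (∑' ν : ℕ, k ((μ:ℤ)-(ν:ℤ)).natAbs * x ν) ^ 2 :=
            pow_le_pow_left₀ nn (hstepA μ) 2
        _ ≤ _ := hstepB μ
    have c2 : ∑ μ ∈ Finset.range N, (2*S) * (∑' ν : ℕ, k ((μ:ℤ)-(ν:ℤ)).natAbs * x ν ^ 2)
        = (2*S) * ∑' ν : ℕ, ∑ μ ∈ Finset.range N, k ((μ:ℤ)-(ν:ℤ)).natAbs * x ν ^ 2 := by
      rw [← Finset.mul_sum]
      congr 1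
      exact (Summable.tsum_finsetSum (fun μ _ => hkx2 μ)).symm
    have c3 : ∑' ν : ℕ, ∑ μ ∈ Finset.range N, k ((μ:ℤ)-(ν:ℤ)).natAbs * x ν ^ 2
        ≤ ∑' ν : ℕ, (2*S) * x ν ^ 2 := by
      apply Summable.tsum_le_tsum _ (summable_sum fun μ _ => hkx2 μ) (hx2.mul_left _)
      intro ν
      rw [← Finset.sum_mul]
      apply mul_le_mul_of_nonneg_right _ (sq_nonneg _)
      have hsymm : ∀ μ : ℕ, ((μ:ℤ)-(ν:ℤ)).natAbs = ((ν:ℤ)-(μ:ℤ)).natAbs := fun μ => by omega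
      calc ∑ μ ∈ Finset.range N, k ((μ:ℤ)-(ν:ℤ)).natAbs
          = ∑ μ ∈ Finset.range N, k ((ν:ℤ)-(μ:ℤ)).natAbs :=
            Finset.sum_congr rfl fun μ _ => by rw [hsymm]
        _ ≤ ∑' μ : ℕ, k ((ν:ℤ)-(μ:ℤ)).natAbs :=
            Summable.sum_le_tsum _ (fun i _ => hk0 _) (aux_shift k hk0 hksum ν).1
        _ ≤ 2*S := (aux_shift k hk0 hksum ν).2
    calc ∑ μ ∈ Finset.range N, (m μ * ∑' ν, a μ ν) ^ 2
        ≤ ∑ μ ∈ Finset.range N, (2*S) * ∑' ν : ℕ, k ((μ:ℤ)-(ν:ℤ)).natAbs * x ν ^ 2 := c1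
      _ = (2*S) * ∑' ν : ℕ, ∑ μ ∈ Finset.range N, k ((μ:ℤ)-(ν:ℤ)).natAbs * x ν ^ 2 := c2
      _ ≤ (2*S) * ∑' ν : ℕ, (2*S) * x ν ^ 2 := by
          apply mul_le_mul_of_nonneg_left c3 (by linarith)
      _ = (2*S) * ((2*S) * ∑' ν, x ν ^ 2) := by rw [tsum_mul_left]
  have hlhs : ∑' μ : ℕ, (m μ * ∑' ν : ℕ, a μ ν) ^ 2 ≤ (2*S) * ((2*S) * ∑' ν, x ν ^ 2) :=
    Real.tsum_le_of_sum_range_le (fun μ => sq_nonneg _) hfin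
  have hexp : Real.exp ((2 * K) * A) = Real.exp (K*A) * Real.exp (K*A) := by
    rw [← Real.exp_add]
    congr 1
    ring
  have hS2 : S * S ≤ (5 * (K * Real.exp (K*A))) * (5 * (K * Real.exp (K*A))) :=
    mul_le_mul hSle hSle hS0 (by positivity)
  have hfinal : (2*S) * ((2*S) * ∑' ν, x ν ^ 2)
      ≤ 100 * K ^ 2 * Real.exp ((2 * K) * A) * ∑' ν, x ν ^ 2 := by
    rw [hexp]
    nlinarith [mul_le_mul_of_nonneg_right hS2 hT0]
  exact hlhs.trans hfinal
end
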